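/- arXiv:1305.1331 — 3 statements merged into one kernel-verified Lean document; each statement's English description precedes it below -/
import Mathlib

section
/- For every separation (A,B) of G of order less than k, where G contains a model of K_t with t ≥ (3/2)k and branch sets X_1,…,X_t, exactly one of V(A)\V(B) and V(B)\V(A) contains some branch set X_i entirely. -/
/-- A finite multigraph without loops: a vertex type, an edge type, and an
endpoint map assigning to each edge an unordered pair of distinct vertices. -/
structure Multigraph where
  V : Type
  E : Type
  [finV : Finite V]
  [finE : Finite E]
  ends : E → Sym2 V
  no_loops : ∀ e, ¬ (ends e).IsDiag

attribute [instance] Multigraph.finV Multigraph.finE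

namespace Multigraph

variable (G : Multigraph)

/-- The set of edges with exactly one endpoint in `X`. -/
def edgeBoundary (X : Set G.V) : Set G.E :=
  {e | ∃ u v, G.ends e = s(u, v) ∧ u ∈ X ∧ v ∉ X}

/-- The degree of a vertex: the number of edges incident with it. -/
noncomputable def degree (v : G.V) : ℕ := {e | v ∈ G.ends e}.ncard

/-- Two vertices are adjacent if some edge joins them. -/
def Adj (u v : G.V) : Prop := ∃ e, G.ends e = s(u, v)

/-- Walks in a multigraph. -/
inductive Walk : G.V → G.V → Type
  | nil (v : G.V) : Walk v v
  | cons {u v w : G.V} (e : G.E) (h : G.ends e = s(u, v)) (p : Walk v w) : Walk u w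

variable {G}

/-- The list of edges of a walk. -/
def Walk.edges : ∀ {u v : G.V}, G.Walk u v → List G.E
  | _, _, .nil _ => []
  | _, _, .cons e _ p => e :: p.edges

/-- The list of vertices of a walk, from the first to the last. -/
def Walk.support : ∀ {u v : G.V}, G.Walk u v → List G.V
  | _, v, .nil _ => [v]
  | u, _, .cons _ _ p => u :: p.support

/-- A walk is a path if it repeats no vertex. -/
def Walk.IsPath {u v : G.V} (p : G.Walk u v) : Prop := p.support.Nodup

/-- The internal vertices of a walk (all vertices except the two endpoints). -/
def Walk.internals {u v : G.V} (p : G.Walk u v) : List G.V := p.support.tail.dropLast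

/-- The walk avoids the edge set `F`. -/
def Walk.avoids {u v : G.V} (p : G.Walk u v) (F : Set G.E) : Prop := ∀ e ∈ p.edges, e ∉ F

variable (G)

/-- Any two vertices can be joined by a walk avoiding the edge set `F`. -/
def ConnectedAvoiding (F : Set G.E) : Prop :=
  ∀ u v : G.V, ∃ p : G.Walk u v, p.avoids F

/-- A multigraph is connected if any two vertices are joined by a walk. -/
def Connected : Prop := G.ConnectedAvoiding ∅

/-- A multigraph is `k`-edge-connected if it has at least two vertices and
deleting any fewer than `k` edges leaves it connected. -/
def EdgeConnected (k : ℕ) : Prop :=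
  Nontrivial G.V ∧ ∀ F : Set G.E, F.ncard < k → G.ConnectedAvoiding F

end Multigraph

open Multigraph

/-- The data of a (weak) immersion of `H` in `G`: an injection of the vertices and
pairwise edge-disjoint composite paths, one for each edge of `H`. -/
structure ImmersionData (H G : Multigraph) where
  π : H.V → G.V
  inj : Function.Injective π
  pathEnds : H.E → G.V × G.V
  path : ∀ f : H.E, G.Walk (pathEnds f).1 (pathEnds f).2
  ends_eq : ∀ f : H.E, Sym2.map π (H.ends f) = s((pathEnds f).1, (pathEnds f).2)
  isPath : ∀ f, (path f).IsPath
  edge_disj : ∀ f f', f ≠ f' → ∀ e, e ∈ (path f).edges → e ∉ (path f').edges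

/-- `G` contains `H` as a (weak) immersion. -/
def Immersion (H G : Multigraph) : Prop := Nonempty (ImmersionData H G)

/-- An immersion is strong if no branch vertex is an internal vertex of a composite path. -/
def ImmersionData.Strong {H G : Multigraph} (I : ImmersionData H G) : Prop :=
  ∀ f : H.E, ∀ v : H.V, I.π v ∉ (I.path f).internals

/-- `G` contains `H` as a strong immersion. -/
def StrongImmersion (H G : Multigraph) : Prop := ∃ I : ImmersionData H G, I.Strong

/-- `G` contains `H` as a topological minor: an immersion whose composite paths are
internally vertex-disjoint and avoid the branch vertices internally. -/
def TopologicalMinor (H G : Multigraph) : Prop :=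
  ∃ I : ImmersionData H G,
    (∀ f v, I.π v ∉ (I.path f).internals) ∧
    (∀ f f', f ≠ f' → ∀ w, w ∈ (I.path f).internals → w ∉ (I.path f').internals)

/-- The complete multigraph `K t`: one edge for every unordered pair of distinct vertices. -/
def cliqueGraph (t : ℕ) : Multigraph where
  V := Fin t
  E := {p : Sym2 (Fin t) // ¬ p.IsDiag}
  ends := Subtype.val
  no_loops := fun e => e.2

/-- The multigraph `S_{k,n}`: vertices `x_1, …, x_n` (`some i`) and `y` (`none`), with
exactly `k` parallel edges between each `x_i` and `y`. -/
def starMulti (k n : ℕ) : Multigraph where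
  V := Option (Fin n)
  E := Fin n × Fin k
  ends := fun p => s(some p.1, none)
  no_loops := fun e h => by simp [Sym2.mk_isDiag_iff] at h

/-- The multigraph `P_{k,n}`: a path on `n` vertices with each edge replaced by `k`
parallel edges. -/
def pathMulti (k n : ℕ) : Multigraph where
  V := Fin n
  E := Fin (n - 1) × Fin k
  ends := fun p => s(⟨p.1.1, by have := p.1.2; omega⟩, ⟨p.1.1 + 1, by have := p.1.2; omega⟩)
  no_loops := fun e h => by simp [Sym2.mk_isDiag_iff, Fin.ext_iff] at h

namespace Multigraph

/-- A subgraph of a multigraph, given by a set of vertices and a set of edges with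
both endpoints among those vertices. -/
structure Sub (G : Multigraph) where
  verts : Set G.V
  edgeSet : Set G.E
  closed : ∀ e ∈ edgeSet, ∀ v ∈ G.ends e, v ∈ verts

/-- `(A, B)` is a separation: `A` and `B` are edge-disjoint subgraphs whose union is `G`. -/
def IsSeparation {G : Multigraph} (A B : G.Sub) : Prop :=
  A.verts ∪ B.verts = Set.univ ∧ A.edgeSet ∪ B.edgeSet = Set.univ ∧ A.edgeSet ∩ B.edgeSet = ∅

/-- The order of a separation `(A, B)`. -/
noncomputable def sepOrder {G : Multigraph} (A B : G.Sub) : ℕ := (A.verts ∩ B.verts).ncard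

/-- `𝒯` is a tangle of order `Θ` in `G`. -/
def IsTangle (G : Multigraph) (𝒯 : Set (G.Sub × G.Sub)) (Θ : ℕ) : Prop :=
  (∀ p ∈ 𝒯, IsSeparation p.1 p.2 ∧ sepOrder p.1 p.2 < Θ) ∧
  (∀ A B : G.Sub, IsSeparation A B → sepOrder A B < Θ → (A, B) ∈ 𝒯 ∨ (B, A) ∈ 𝒯) ∧
  (∀ p₁ ∈ 𝒯, ∀ p₂ ∈ 𝒯, ∀ p₃ ∈ 𝒯,
    ¬ (p₁.1.verts ∪ p₂.1.verts ∪ p₃.1.verts = Set.univ ∧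
       p₁.1.edgeSet ∪ p₂.1.edgeSet ∪ p₃.1.edgeSet = Set.univ)) ∧
  (∀ p ∈ 𝒯, p.1.verts ≠ Set.univ)

/-- The line graph of a multigraph: vertices are the edges of `G`, with an edge of the
line graph for each unordered pair of distinct edges of `G` sharing an endpoint. -/
def lineGraph (G : Multigraph) : Multigraph where
  V := G.E
  E := {p : Sym2 G.E // ¬ p.IsDiag ∧ ∃ e f, p = s(e, f) ∧ ∃ v, v ∈ G.ends e ∧ v ∈ G.ends f}
  ends := Subtype.val
  no_loops := fun e => e.2.1

/-- `G'` (with projection `q` and new vertex `x`) is obtained from `G` by consolidating the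
vertex set `X`: delete all edges with both ends in `X` and identify `X` to the vertex `x`. -/
def IsConsolidation (G : Multigraph) (X : Set G.V) (G' : Multigraph)
    (q : G.V → G'.V) (x : G'.V) : Prop :=
  Function.Surjective q ∧ (∀ a ∈ X, q a = x) ∧ (∀ a ∉ X, q a ≠ x) ∧
  (∀ a b, a ∉ X → b ∉ X → q a = q b → a = b) ∧
  ∃ φ : {e : G.E // ∃ w ∈ G.ends e, w ∉ X} ≃ G'.E,
    ∀ e, G'.ends (φ e) = Sym2.map q (G.ends e.1)

/-- An `X`-spider of order `k` with body `v`: `k` pairwise edge-disjoint paths from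
`v ∉ X` to `X`, none of them having an internal vertex in `X`. -/
def HasSpiderWithBody (G : Multigraph) (X : Set G.V) (k : ℕ) (v : G.V) : Prop :=
  v ∉ X ∧ ∃ (tgt : Fin k → G.V) (P : ∀ i, G.Walk v (tgt i)),
    (∀ i, tgt i ∈ X) ∧ (∀ i, (P i).IsPath) ∧
    (∀ i, ∀ w ∈ (P i).internals, w ∉ X) ∧
    (∀ i j, i ≠ j → ∀ e ∈ (P i).edges, e ∉ (P j).edges)

/-- `G` contains an `X`-spider of order `k`. -/
def HasXSpider (G : Multigraph) (X : Set G.V) (k : ℕ) : Prop :=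
  ∃ v, HasSpiderWithBody G X k v

/-- A model of the complete graph `K t` in `G`: `t` pairwise disjoint nonempty connected
branch sets with an edge of `G` between any two of them. -/
def IsCliqueModel (G : Multigraph) (t : ℕ) (X : Fin t → Set G.V) : Prop :=
  (∀ i, (X i).Nonempty) ∧
  (∀ i j, i ≠ j → Disjoint (X i) (X j)) ∧
  (∀ i, ∀ u ∈ X i, ∀ v ∈ X i, ∃ p : G.Walk u v, ∀ w ∈ p.support, w ∈ X i) ∧
  (∀ i j, i ≠ j → ∃ e, ∃ a ∈ X i, ∃ b ∈ X j, G.ends e = s(a, b))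

/-- The canonical separation `(A, B)` of the line graph of `G` associated to a vertex
set `U ⊆ V(G)`. -/
def IsCanonicalSeparation (G : Multigraph) (U : Set G.V) (A B : G.lineGraph.Sub) : Prop :=
  A.verts = {e : G.E | ∃ w ∈ G.ends e, w ∈ U} ∧
  A.edgeSet = {p : G.lineGraph.E | ∀ q ∈ G.lineGraph.ends p, ∃ w ∈ G.ends q, w ∈ U} ∧
  B.verts = {e : G.E | ∃ w ∈ G.ends e, w ∉ U} ∧
  B.edgeSet = {p : G.lineGraph.E | (∀ q ∈ G.lineGraph.ends p, ∃ w ∈ G.ends q, w ∉ U) ∧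
    ¬ (∀ q ∈ G.lineGraph.ends p, q ∈ G.edgeBoundary U)}

/-- A `k`-star with center `u`: a set of `k` edges all incident with `u`. -/
def IsKStarWithCenter (G : Multigraph) (F : Set G.E) (k : ℕ) (u : G.V) : Prop :=
  F.ncard = k ∧ ∀ e ∈ F, u ∈ G.ends e

/-- A set `F` of vertices of the line graph of `G` is free with respect to a tangle `𝒯`
in the line graph if no separation in `𝒯` of order less than `|F|` has `F` on its small side. -/
def FreeInTangle (G : Multigraph) (𝒯 : Set (G.lineGraph.Sub × G.lineGraph.Sub))
    (F : Set G.E) : Prop :=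
  ¬ ∃ p ∈ 𝒯, sepOrder p.1 p.2 < F.ncard ∧ F ⊆ p.1.verts

end Multigraph



open Multigraph in
lemma walk_stay_side {G : Multigraph} {A B : G.Sub} (hsep : IsSeparation A B)
    {u v : G.V} (p : G.Walk u v)
    (hsupp : ∀ w ∈ p.support, w ∉ A.verts ∩ B.verts)
    (hu : u ∈ A.verts) : v ∈ A.verts ∧ v ∉ B.verts := by
  induction p with
  | nil w => exact ⟨hu, fun hb => hsupp w (by simp [Walk.support]) ⟨hu, hb⟩⟩
  | cons e h p ih =>
    rename_i a b c
    have hanB : a ∉ B.verts := fun hb => hsupp a (by simp [Walk.support]) ⟨hu, hb⟩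
    have heA : e ∈ A.edgeSet := by
      have : e ∈ A.edgeSet ∪ B.edgeSet := by rw [hsep.2.1]; trivial
      rcases this with h' | h'
      · exact h'
      · exact absurd (B.closed e h' a (by rw [h]; simp)) hanB
    have hbA : b ∈ A.verts := A.closed e heA b (by rw [h]; simp)
    exact ih (fun w hw => hsupp w (by simp [Walk.support, hw])) hbA

open Multigraph in
lemma isSeparation_symm {G : Multigraph} {A B : G.Sub} (hsep : IsSeparation A B) :
    IsSeparation B A :=
  ⟨by rw [Set.union_comm]; exact hsep.1, by rw [Set.union_comm]; exact hsep.2.1,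
   by rw [Set.inter_comm]; exact hsep.2.2⟩


open Multigraph in
/-- for any separation of order less than `k`, exactly one side fully
contains a branch set of a `K_t` model, where `t ≥ (3/2)k`. -/
theorem cliqueModel_branchSet_side (G : Multigraph) (t k : ℕ) (htk : 3 * k ≤ 2 * t)
    (X : Fin t → Set G.V) (hmodel : IsCliqueModel G t X)
    (A B : G.Sub) (hsep : IsSeparation A B) (hord : sepOrder A B < k) :
    Xor' (∃ i, X i ⊆ A.verts \ B.verts) (∃ i, X i ⊆ B.verts \ A.verts) := by
  set S := A.verts ∩ B.verts with hS
  have hkt : k ≤ t := by omega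
  -- some branch set avoids S
  have hexists : ∃ i, ∀ x ∈ X i, x ∉ S := by
    by_contra hcon
    push_neg at hcon
    have hne : ∀ i, ∃ x, x ∈ X i ∩ S := by
      intro i
      obtain ⟨x, hx, hxS⟩ := hcon i
      exact ⟨x, hx, hxS⟩
    choose f hf using hne
    have finj : Function.Injective f := by
      intro i j hij
      by_contra hne'
      exact ((hmodel.2.1 i j hne').le_bot ⟨(hf i).1, hij ▸ (hf j).1⟩)
    have : t ≤ S.ncard := by
      have := Nat.card_le_card_of_injective (fun i => (⟨f i, (hf i).2⟩ : S))
        (fun i j h => finj (congrArg Subtype.val h))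
      simpa [Nat.card_coe_set_eq] using this
    have hord' : S.ncard < k := hord
    omega
  obtain ⟨i, hiS⟩ := hexists
  obtain ⟨u, hu⟩ := hmodel.1 i
  have huAB : u ∈ A.verts ∪ B.verts := by rw [hsep.1]; trivial
  -- not both sides
  have notboth : ¬ ((∃ i, X i ⊆ A.verts \ B.verts) ∧ (∃ i, X i ⊆ B.verts \ A.verts)) := by
    rintro ⟨⟨i₁, hi₁⟩, ⟨j₁, hj₁⟩⟩
    have hij : i₁ ≠ j₁ := by
      rintro rfl
      obtain ⟨x, hx⟩ := hmodel.1 i₁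
      exact (hj₁ hx).2 (hi₁ hx).1
    obtain ⟨e, a, ha, b, hb, hends⟩ := hmodel.2.2.2 i₁ j₁ hij
    have : e ∈ A.edgeSet ∪ B.edgeSet := by rw [hsep.2.1]; trivial
    rcases this with h' | h'
    · exact (hj₁ hb).2 (A.closed e h' b (by rw [hends]; simp))
    · exact (hi₁ ha).2 (B.closed e h' a (by rw [hends]; simp))
  rcases huAB with huA | huB
  · left
    refine ⟨⟨i, fun v hv => ?_⟩, fun hQ => notboth ⟨⟨i, fun v hv => ?_⟩, hQ⟩⟩ <;>
    · obtain ⟨p, hp⟩ := hmodel.2.2.1 i u hu v hv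
      exact walk_stay_side hsep p (fun w hw => hiS w (hp w hw)) huA
  · right
    have key : ∀ v ∈ X i, v ∈ B.verts ∧ v ∉ A.verts := by
      intro v hv
      obtain ⟨p, hp⟩ := hmodel.2.2.1 i u hu v hv
      exact walk_stay_side (isSeparation_symm hsep) p
        (fun w hw h' => hiS w (hp w hw) ⟨h'.2, h'.1⟩) huB
    exact ⟨⟨i, fun v hv => key v hv⟩, fun hP => notboth ⟨hP, ⟨i, fun v hv => key v hv⟩⟩⟩
end

section
/- If two graphs G and H are both 3-regular, then G contains H as an immersion if and only if G contains H as a topological minor (a subdivision of H as a subgraph). -/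
open Multigraph

namespace Multigraph
variable {G : Multigraph}

lemma Walk.start_mem_support : ∀ {u v : G.V} (p : G.Walk u v), u ∈ p.support
  | _, _, .nil _ => by simp [Walk.support]
  | _, _, .cons e h p => by simp [Walk.support]

lemma Walk.end_mem_support : ∀ {u v : G.V} (p : G.Walk u v), v ∈ p.support
  | _, _, .nil _ => by simp [Walk.support]
  | _, _, .cons e h p => by simp [Walk.support, p.end_mem_support]

lemma Walk.exists_edge_start {u v : G.V} (p : G.Walk u v) (huv : u ≠ v) :
    ∃ e ∈ p.edges, u ∈ G.ends e := by
  cases p with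
  | nil => exact absurd rfl huv
  | cons e h q => exact ⟨e, by simp [Walk.edges], by rw [h]; simp⟩

lemma Walk.exists_edge_end {u v : G.V} (p : G.Walk u v) (huv : u ≠ v) :
    ∃ e ∈ p.edges, v ∈ G.ends e := by
  induction p with
  | nil => exact absurd rfl huv
  | cons e h q ih =>
    rename_i u' w' v'
    by_cases hwv : w' = v'
    · subst hwv
      exact ⟨e, by simp [Walk.edges], by rw [h]; simp⟩
    · obtain ⟨e', he', hve'⟩ := ih hwv
      exact ⟨e', by simp [Walk.edges, he'], hve'⟩

lemma Walk.isPath_of_cons {u v w : G.V} {e : G.E} {h : G.ends e = s(u, v)}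
    {p : G.Walk v w} (hp : (Walk.cons e h p).IsPath) : p.IsPath := by
  simp only [Walk.IsPath, Walk.support, List.nodup_cons] at hp
  exact hp.2

lemma Walk.start_not_internal {u v : G.V} (p : G.Walk u v) (hp : p.IsPath) :
    u ∉ p.internals := by
  cases p with
  | nil => simp [Walk.internals, Walk.support]
  | cons e h q =>
    simp only [Walk.IsPath, Walk.support, List.nodup_cons] at hp
    intro hx
    exact hp.1 (List.dropLast_sublist _ |>.subset hx)

lemma Walk.end_not_internal {u v : G.V} (p : G.Walk u v) (hp : p.IsPath) :
    v ∉ p.internals := by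
  induction p with
  | nil => simp [Walk.internals, Walk.support]
  | cons e h q ih =>
    rename_i u' w' v'
    cases q with
    | nil => simp [Walk.internals, Walk.support]
    | cons e' h' r =>
      rename_i z
      have hq : (Walk.cons e' h' r).IsPath := Walk.isPath_of_cons hp
      have hi := ih hq
      simp only [Walk.IsPath, Walk.support, List.nodup_cons] at hp hq
      simp only [Walk.internals, Walk.support, List.tail_cons] at hi ⊢
      have hrne : r.support ≠ [] := by cases r <;> simp [Walk.support]
      rw [List.dropLast_cons_of_ne_nil hrne]
      intro hmem
      rcases List.mem_cons.mp hmem with rfl | hmem'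
      · exact hq.1 r.end_mem_support
      · exact hi hmem'

lemma Walk.internal_two_edges {u v x : G.V} (p : G.Walk u v) (hp : p.IsPath)
    (hx : x ∈ p.internals) :
    ∃ e₁ e₂, e₁ ∈ p.edges ∧ e₂ ∈ p.edges ∧ e₁ ≠ e₂ ∧ x ∈ G.ends e₁ ∧ x ∈ G.ends e₂ := by
  induction p with
  | nil => simp [Walk.internals, Walk.support] at hx
  | cons e h q ih =>
    rename_i u' w' v'
    cases q with
    | nil => simp [Walk.internals, Walk.support] at hx
    | cons e' h' r =>
      rename_i z
      have hq : (Walk.cons e' h' r).IsPath := Walk.isPath_of_cons hp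
      simp only [Walk.IsPath, Walk.support, List.nodup_cons] at hp
      have hrne : r.support ≠ [] := by cases r <;> simp [Walk.support]
      simp only [Walk.internals, Walk.support, List.tail_cons,
        List.dropLast_cons_of_ne_nil hrne, List.mem_cons] at hx
      rcases hx with rfl | hx'
      · refine ⟨e, e', by simp [Walk.edges], by simp [Walk.edges], ?_, by rw [h]; simp,
          by rw [h']; simp⟩
        intro hee
        subst hee
        rw [h] at h'
        rw [Sym2.eq_iff] at h'
        rcases h' with ⟨rfl, _⟩ | ⟨rfl, _⟩
        · exact hp.1 (by simp [Walk.support])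
        · exact hp.1 (by simp [Walk.support, r.start_mem_support])
      · obtain ⟨e₁, e₂, he₁, he₂, hne, hx₁, hx₂⟩ := ih hq (by
          simpa [Walk.internals, Walk.support] using hx')
        simp only [Walk.edges, List.mem_cons] at he₁ he₂
        refine ⟨e₁, e₂, ?_, ?_, hne, hx₁, hx₂⟩ <;> simp only [Walk.edges, List.mem_cons] <;> tauto

end Multigraph

lemma four_distinct_contra {α : Type} [Finite α] {S : Set α} (hS : S.ncard = 3)
    {a b c d : α} (ha : a ∈ S) (hb : b ∈ S) (hc : c ∈ S) (hd : d ∈ S)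
    (hab : a ≠ b) (hac : a ≠ c) (had : a ≠ d) (hbc : b ≠ c) (hbd : b ≠ d)
    (hcd : c ≠ d) : False := by
  have hsub : ({a, b, c, d} : Set α) ⊆ S := by
    intro x hx
    rcases hx with rfl | rfl | rfl | rfl <;> assumption
  have h4 : ({a, b, c, d} : Set α).ncard = 4 := by
    rw [Set.ncard_insert_of_notMem (by simp [hab, hac, had]),
      Set.ncard_insert_of_notMem (by simp [hbc, hbd]), Set.ncard_pair hcd]
  have := Set.ncard_le_ncard hsub (Set.toFinite S)
  omega

/-- for 3-regular graphs, immersion coincides with topological minor. -/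
theorem cubic_immersion_iff_topMinor (G H : Multigraph)
    (hG : ∀ v, G.degree v = 3) (hH : ∀ v, H.degree v = 3) :
    Immersion H G ↔ TopologicalMinor H G := by
  constructor
  · rintro ⟨I⟩
    have key : ∀ (f : H.E) (v : H.V), v ∈ H.ends f →
        (∃ e ∈ (I.path f).edges, I.π v ∈ G.ends e) ∧ I.π v ∉ (I.path f).internals := by
      intro f v hvf
      have hnd : ¬ (s((I.pathEnds f).1, (I.pathEnds f).2) : Sym2 G.V).IsDiag := by
        rw [← I.ends_eq f, Sym2.isDiag_map I.inj]
        exact H.no_loops f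
      have hab : (I.pathEnds f).1 ≠ (I.pathEnds f).2 := by
        simpa [Sym2.mk_isDiag_iff] using hnd
      have hmem : I.π v ∈ (s((I.pathEnds f).1, (I.pathEnds f).2) : Sym2 G.V) := by
        rw [← I.ends_eq f]
        exact Sym2.mem_map.mpr ⟨v, hvf, rfl⟩
      rw [Sym2.mem_iff] at hmem
      rcases hmem with h1 | h1 <;> rw [h1]
      · exact ⟨(I.path f).exists_edge_start hab, (I.path f).start_not_internal (I.isPath f)⟩
      · exact ⟨(I.path f).exists_edge_end hab, (I.path f).end_not_internal (I.isPath f)⟩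
    have main : ∀ (f₀ : H.E) (v : H.V), I.π v ∉ (I.path f₀).internals := by
      intro f₀ v hmem
      have hT := hH v
      rw [Multigraph.degree, Set.ncard_eq_three] at hT
      obtain ⟨f₁, f₂, f₃, h12, h13, h23, hTeq⟩ := hT
      have hm : ∀ f ∈ ({f₁, f₂, f₃} : Set H.E), v ∈ H.ends f := by
        rw [← hTeq]; exact fun f hf => hf
      have hv1 : v ∈ H.ends f₁ := hm f₁ (by simp)
      have hv2 : v ∈ H.ends f₂ := hm f₂ (by simp)
      have hv3 : v ∈ H.ends f₃ := hm f₃ (by simp)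
      have hf0 : ∀ f, v ∈ H.ends f → f₀ ≠ f := by
        intro f hvf heq
        subst heq
        exact (key f₀ v hvf).2 hmem
      obtain ⟨e₁, e₂, he₁, he₂, hne, hxe₁, hxe₂⟩ :=
        (I.path f₀).internal_two_edges (I.isPath f₀) hmem
      obtain ⟨g₁, hg₁, hxg₁⟩ := (key f₁ v hv1).1
      obtain ⟨g₂, hg₂, hxg₂⟩ := (key f₂ v hv2).1
      obtain ⟨g₃, hg₃, hxg₃⟩ := (key f₃ v hv3).1
      have d01 : e₁ ≠ g₁ := fun h => I.edge_disj f₀ f₁ (hf0 f₁ hv1) e₁ he₁ (h ▸ hg₁)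
      have d02 : e₁ ≠ g₂ := fun h => I.edge_disj f₀ f₂ (hf0 f₂ hv2) e₁ he₁ (h ▸ hg₂)
      have d03 : e₁ ≠ g₃ := fun h => I.edge_disj f₀ f₃ (hf0 f₃ hv3) e₁ he₁ (h ▸ hg₃)
      have d12 : g₁ ≠ g₂ := fun h => I.edge_disj f₁ f₂ h12 g₁ hg₁ (h ▸ hg₂)
      have d13 : g₁ ≠ g₃ := fun h => I.edge_disj f₁ f₃ h13 g₁ hg₁ (h ▸ hg₃)
      have d23 : g₂ ≠ g₃ := fun h => I.edge_disj f₂ f₃ h23 g₂ hg₂ (h ▸ hg₃)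
      exact four_distinct_contra (hG (I.π v)) hxe₁ hxg₁ hxg₂ hxg₃ d01 d02 d03 d12 d13 d23
    have disj : ∀ f f', f ≠ f' → ∀ w, w ∈ (I.path f).internals →
        w ∉ (I.path f').internals := by
      intro f f' hff w hw hw'
      obtain ⟨e₁, e₂, he₁, he₂, hne, hxe₁, hxe₂⟩ :=
        (I.path f).internal_two_edges (I.isPath f) hw
      obtain ⟨e₃, e₄, he₃, he₄, hne', hxe₃, hxe₄⟩ :=
        (I.path f').internal_two_edges (I.isPath f') hw'
      have d13 : e₁ ≠ e₃ := fun h => I.edge_disj f f' hff e₁ he₁ (h ▸ he₃)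
      have d14 : e₁ ≠ e₄ := fun h => I.edge_disj f f' hff e₁ he₁ (h ▸ he₄)
      have d23 : e₂ ≠ e₃ := fun h => I.edge_disj f f' hff e₂ he₂ (h ▸ he₃)
      have d24 : e₂ ≠ e₄ := fun h => I.edge_disj f f' hff e₂ he₂ (h ▸ he₄)
      exact four_distinct_contra (hG w) hxe₁ hxe₂ hxe₃ hxe₄ hne d13 d14 d23 d24 hne'
    exact ⟨I, main, disj⟩
  · rintro ⟨I, -, -⟩
    exact ⟨I⟩
end

section
/- The graph P_{k,n}, obtained from a path on n ≥ 2 vertices by replacing each edge with k parallel edges, is k-edge-connected but does not contain K_3 as a strong immersion when n ≥ 4. -/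
open Multigraph

/-!
Deleting fewer than `k` edges of `P_{k,n}` leaves one of the `k` parallel edges between each
pair of consecutive vertices, so `P_{k,n}` stays connected. Conversely, edges of `P_{k,n}` only
join consecutive vertices, so a walk visits every vertex between its ends. Given three branch
vertices `a < b < c`, the path joining `a` and `c` therefore passes through `b` internally,
and no immersion of `K_3` is strong.
-/

namespace Multigraph

variable {G : Multigraph}

lemma Walk.support_ne_nil : ∀ {u v : G.V} (p : G.Walk u v), p.support ≠ []
  | _, _, .nil _ => List.cons_ne_nil _ _
  | _, _, .cons _ _ _ => List.cons_ne_nil _ _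

lemma Walk.mem_support_dropLast : ∀ {u v : G.V} (p : G.Walk u v) {x : G.V},
    x ∈ p.support → x ≠ v → x ∈ p.support.dropLast
  | _, _, .nil _, _, hx, hxv => absurd (List.mem_singleton.1 hx) hxv
  | _, _, .cons _ _ p, _, hx, hxv => by
      rw [support, List.dropLast_cons_of_ne_nil p.support_ne_nil]
      rcases List.mem_cons.1 hx with rfl | hx
      · exact List.mem_cons_self
      · exact List.mem_cons_of_mem _ (p.mem_support_dropLast hx hxv)

lemma Walk.mem_internals_of_mem_support {u v : G.V} (p : G.Walk u v) {x : G.V}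
    (hx : x ∈ p.support) (hxu : x ≠ u) (hxv : x ≠ v) : x ∈ p.internals := by
  cases p with
  | nil => exact absurd (List.mem_singleton.1 hx) hxv
  | cons _ _ p => exact p.mem_support_dropLast ((List.mem_cons.1 hx).resolve_left hxu) hxv

variable (G) in
def AdjAvoiding (F : Set G.E) (u v : G.V) : Prop := ∃ e ∉ F, G.ends e = s(u, v)

lemma exists_walk_avoids_of_reflTransGen {F : Set G.E} {u v : G.V}
    (h : Relation.ReflTransGen (G.AdjAvoiding F) u v) : ∃ p : G.Walk u v, p.avoids F := by
  induction h using Relation.ReflTransGen.head_induction_on with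
  | refl => exact ⟨.nil v, fun _ he => nomatch he⟩
  | head hadj _ ih =>
    obtain ⟨e, heF, hends⟩ := hadj
    obtain ⟨p, hp⟩ := ih
    exact ⟨.cons e hends p, fun f hf => (List.mem_cons.1 hf).elim (· ▸ heF) (hp f)⟩

end Multigraph

lemma exists_lt_lt_of_injective {α : Type*} [LinearOrder α] {f : Fin 3 → α}
    (hf : Function.Injective f) : ∃ i j l, f i < f j ∧ f j < f l := by
  have hmono : StrictMono (f ∘ Tuple.sort f) :=
    (Tuple.monotone_sort f).strictMono_of_injective (hf.comp (Tuple.sort f).injective)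
  exact ⟨Tuple.sort f 0, Tuple.sort f 1, Tuple.sort f 2, hmono (by decide), hmono (by decide)⟩

section pathMulti

variable {k n : ℕ}

lemma pathMulti_val_succ_of_ends_eq {e : (pathMulti k n).E} {u w : Fin n}
    (h : (pathMulti k n).ends e = s(u, w)) : w.val = u.val + 1 ∨ u.val = w.val + 1 := by
  rcases Sym2.eq_iff.1 h with ⟨h1, h2⟩ | ⟨h1, h2⟩
  · left; rw [← h1, ← h2]
  · right; rw [← h1, ← h2]

lemma pathMulti_mem_support : ∀ {u v : Fin n} (p : (pathMulti k n).Walk u v) {m : Fin n},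
    min u.val v.val ≤ m.val → m.val ≤ max u.val v.val → m ∈ p.support
  | _, _, .nil _, _, hum, hmv => List.mem_singleton.2 (Fin.ext (by omega))
  | u, _, .cons _ h p, m, hum, hmv => by
    by_cases hmu : m = u
    · exact hmu ▸ List.mem_cons_self
    · have hstep := pathMulti_val_succ_of_ends_eq h
      have hmu' := Fin.val_ne_of_ne hmu
      exact List.mem_cons_of_mem _ (pathMulti_mem_support p (by omega) (by omega))

lemma pathMulti_mem_internals {u v : Fin n} (p : (pathMulti k n).Walk u v) {x y m : Fin n}
    (hxy : s(x, y) = s(u, v)) (hxm : x < m) (hmy : m < y) : m ∈ p.internals := by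
  have hxm' := Fin.lt_def.1 hxm
  have hmy' := Fin.lt_def.1 hmy
  rcases Sym2.eq_iff.1 hxy with ⟨rfl, rfl⟩ | ⟨rfl, rfl⟩
  · exact p.mem_internals_of_mem_support (pathMulti_mem_support p (by omega) (by omega))
      hxm.ne' hmy.ne
  · exact p.mem_internals_of_mem_support (pathMulti_mem_support p (by omega) (by omega))
      hmy.ne hxm.ne'

theorem pathMulti_not_strongImmersion_cliqueGraph_three :
    ¬ StrongImmersion (cliqueGraph 3) (pathMulti k n) := by
  rintro ⟨I, hstrong⟩
  obtain ⟨i, j, l, hij, hjl⟩ := exists_lt_lt_of_injective (α := Fin n) I.inj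
  let f : (cliqueGraph 3).E :=
    ⟨s(i, l), fun hd => (hij.trans hjl).ne (congrArg I.π (Sym2.mk_isDiag_iff.1 hd))⟩
  exact hstrong f j (pathMulti_mem_internals (I.path f) (I.ends_eq f) hij hjl)

lemma pathMulti_exists_not_mem {F : Set (pathMulti k n).E} (hF : F.ncard < k)
    (i : Fin (n - 1)) : ∃ j : Fin k, (i, j) ∉ F := by
  by_contra! hall
  have hsub : Set.range (Prod.mk i) ⊆ F := Set.range_subset_iff.2 hall
  have := Set.ncard_le_ncard hsub (Set.toFinite F)
  rw [Set.ncard_range_of_injective (Prod.mk_right_injective i), Nat.card_eq_fintype_card,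
    Fintype.card_fin] at this
  exact hF.not_ge this

lemma pathMulti_adjAvoiding_succ {F : Set (pathMulti k n).E} (hF : F.ncard < k) {i m : Fin n}
    (him : i < m) : (pathMulti k n).AdjAvoiding F i (Order.succ i : Fin n) := by
  have hsucc : i ⋖ ⟨i.val + 1, by omega⟩ := Fin.covBy_iff.2 (Order.covBy_add_one _)
  obtain ⟨j, hj⟩ := pathMulti_exists_not_mem hF ⟨i.val, by omega⟩
  exact ⟨(⟨i.val, by omega⟩, j), hj, by rw [hsucc.succ_eq]; rfl⟩

theorem pathMulti_connectedAvoiding {F : Set (pathMulti k n).E} (hF : F.ncard < k) :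
    (pathMulti k n).ConnectedAvoiding F := fun _ _ =>
  exists_walk_avoids_of_reflTransGen <| reflTransGen_of_succ (α := Fin n) _
    (fun _ hi => pathMulti_adjAvoiding_succ hF hi.2)
    (fun _ hi => (pathMulti_adjAvoiding_succ hF hi.2).imp fun _ ⟨heF, hends⟩ =>
      ⟨heF, hends.trans Sym2.eq_swap⟩)

theorem pathMulti_edgeConnected (hn : 2 ≤ n) : (pathMulti k n).EdgeConnected k :=
  ⟨Fin.nontrivial_iff_two_le.2 hn, fun _ => pathMulti_connectedAvoiding⟩

end pathMulti

/-- `P_{k,n}` is `k`-edge-connected but, for `n ≥ 4`, contains no strong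
immersion of `K_3`. -/
theorem pathMulti_edgeConnected_no_K3 (k n : ℕ) (hn : 2 ≤ n) :
    (pathMulti k n).EdgeConnected k ∧
    (4 ≤ n → ¬ StrongImmersion (cliqueGraph 3) (pathMulti k n)) :=
  ⟨pathMulti_edgeConnected hn, fun _ => pathMulti_not_strongImmersion_cliqueGraph_three⟩
end
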